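/- arXiv:2306.08459 — 7 statements merged into one kernel-verified Lean document; each statement's English description precedes it below -/
import Mathlib

section
/- Consider the input affine system ẋ = f(x) + g(x)u, y = h(x). Suppose V : ℝⁿ → ℝ is differentiable with V(x) ≥ 0 for all x and V(0) = 0, and suppose there exist functions L : ℝⁿ → ℝⁿ and W : ℝⁿ → ℝ^{n×n} such that for all x ∈ ℝⁿ: (i) (1/2) g(x)ᵀ∇V(x) = Ŝ(x)ᵀ f(x) − W(x)ᵀ L(x), (ii) ∇V(x)ᵀ f(x) = f(x)ᵀ ∇h(x) Q ∇h(x)ᵀ f(x) − L(x)ᵀ L(x), (iii) R̂(x) = W(x)ᵀ W(x), where Ŝ(x) = ∇h(x) Q ∇h(x)ᵀ g(x) + ∇h(x) S and R̂(x) = g(x)ᵀ ∇h(x) Q ∇h(x)ᵀ g(x) + 2 g(x)ᵀ ∇h(x) S + R. Then for all x, u ∈ ℝⁿ, the differential dissipation inequality ∇V(x)ᵀ (f(x) + g(x)u) ≤ ω(u, ẏ) holds, where ẏ = ∇h(x)ᵀ (f(x) + g(x)u). -/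
/-! Completing the square: with `Ŝ = sHat` and `R̂ = rHat`, the supply rate at
`ẏ = ∇hᵀ(f + g u)` expands to `fᵀ ∇h Q ∇hᵀ f + 2 (Ŝᵀ f)ᵀ u + uᵀ R̂ u`, and the three identities
turn `ω(u, ẏ) - ∇Vᵀ(f + g u)` into `|L + W u|² ≥ 0`. -/

open Matrix

section

variable {α : Type*} [CommRing α] {n m p k : Type*} [Fintype n] [Fintype m] [Fintype p]
  [Fintype k]

def supplyRate (Q : Matrix p p α) (S : Matrix p m α) (R : Matrix m m α) (u : m → α)
    (dy : p → α) : α :=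
  dy ⬝ᵥ (Q *ᵥ dy) + 2 * (dy ⬝ᵥ (S *ᵥ u)) + u ⬝ᵥ (R *ᵥ u)

def sHat (H : Matrix n p α) (Q : Matrix p p α) (S : Matrix p m α) (G : Matrix n m α) :
    Matrix n m α :=
  H * Q * Hᵀ * G + H * S

def rHat (H : Matrix n p α) (Q : Matrix p p α) (S : Matrix p m α) (R : Matrix m m α)
    (G : Matrix n m α) : Matrix m m α :=
  Gᵀ * H * Q * Hᵀ * G + (2 : α) • (Gᵀ * H * S) + R

theorem dotProduct_mulVec_eq_transpose_mulVec_dotProduct (v : n → α) (A : Matrix n m α)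
    (w : m → α) : v ⬝ᵥ (A *ᵥ w) = Aᵀ *ᵥ v ⬝ᵥ w := by
  rw [dotProduct_mulVec, mulVec_transpose]

theorem supplyRate_transpose_mulVec_add {Q : Matrix p p α} (hQ : Q.IsSymm) (S : Matrix p m α)
    (R : Matrix m m α) (H : Matrix n p α) (G : Matrix n m α) (f : n → α) (u : m → α) :
    supplyRate Q S R u (Hᵀ *ᵥ (f + G *ᵥ u)) =
      f ⬝ᵥ ((H * Q * Hᵀ) *ᵥ f) + 2 * ((sHat H Q S G)ᵀ *ᵥ f ⬝ᵥ u)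
        + u ⬝ᵥ (rHat H Q S R G *ᵥ u) := by
  rw [supplyRate, mulVec_add]
  set a := Hᵀ *ᵥ f
  set b := Hᵀ *ᵥ (G *ᵥ u)
  have hQab : b ⬝ᵥ (Q *ᵥ a) = a ⬝ᵥ (Q *ᵥ b) := by
    rw [dotProduct_mulVec_eq_transpose_mulVec_dotProduct, hQ.eq, dotProduct_comm]
  have hShat : (sHat H Q S G)ᵀ *ᵥ f ⬝ᵥ u = a ⬝ᵥ (Q *ᵥ b) + a ⬝ᵥ (S *ᵥ u) := by
    simp only [sHat, ← dotProduct_mulVec_eq_transpose_mulVec_dotProduct, add_mulVec,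
      dotProduct_add, ← mulVec_mulVec]
    simp only [dotProduct_mulVec_eq_transpose_mulVec_dotProduct f H, a, b]
  have hRhat :
      u ⬝ᵥ (rHat H Q S R G *ᵥ u) = b ⬝ᵥ (Q *ᵥ b) + 2 * (b ⬝ᵥ (S *ᵥ u)) + u ⬝ᵥ (R *ᵥ u) := by
    simp only [rHat, add_mulVec, smul_mulVec, dotProduct_add, dotProduct_smul, smul_eq_mul,
      ← mulVec_mulVec, dotProduct_mulVec_eq_transpose_mulVec_dotProduct u Gᵀ, transpose_transpose,
      dotProduct_mulVec_eq_transpose_mulVec_dotProduct (G *ᵥ u) H, b]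
  have hf : f ⬝ᵥ ((H * Q * Hᵀ) *ᵥ f) = a ⬝ᵥ (Q *ᵥ a) := by
    rw [← mulVec_mulVec, ← mulVec_mulVec, dotProduct_mulVec_eq_transpose_mulVec_dotProduct]
  rw [hf, hShat, hRhat, mulVec_add]
  simp only [dotProduct_add, add_dotProduct, hQab]
  ring

theorem dotProduct_self_add_mulVec (l : k → α) (W : Matrix k m α) (u : m → α) :
    (l + W *ᵥ u) ⬝ᵥ (l + W *ᵥ u) = l ⬝ᵥ l + 2 * (Wᵀ *ᵥ l ⬝ᵥ u) + u ⬝ᵥ ((Wᵀ * W) *ᵥ u) := by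
  rw [← mulVec_mulVec, mulVec_transpose, mulVec_transpose, ← dotProduct_mulVec, dotProduct_comm u,
    ← dotProduct_mulVec]
  simp only [dotProduct_add, add_dotProduct, dotProduct_comm (W *ᵥ u) l]
  ring

theorem supplyRate_eq_dotProduct_add_dotProduct_self {Q : Matrix p p α} (hQ : Q.IsSymm)
    {S : Matrix p m α} {R : Matrix m m α} {H : Matrix n p α} {G : Matrix n m α} {f q : n → α}
    {l : k → α} {W : Matrix k m α}
    (h₁ : Gᵀ *ᵥ q = (2 : α) • ((sHat H Q S G)ᵀ *ᵥ f - Wᵀ *ᵥ l))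
    (h₂ : q ⬝ᵥ f = f ⬝ᵥ ((H * Q * Hᵀ) *ᵥ f) - l ⬝ᵥ l) (h₃ : rHat H Q S R G = Wᵀ * W)
    (u : m → α) :
    supplyRate Q S R u (Hᵀ *ᵥ (f + G *ᵥ u)) =
      q ⬝ᵥ (f + G *ᵥ u) + (l + W *ᵥ u) ⬝ᵥ (l + W *ᵥ u) := by
  rw [supplyRate_transpose_mulVec_add hQ, dotProduct_self_add_mulVec, ← h₃, dotProduct_add,
    dotProduct_mulVec_eq_transpose_mulVec_dotProduct q G, h₁, h₂, smul_dotProduct, sub_dotProduct,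
    smul_eq_mul]
  ring

variable [LinearOrder α] [IsStrictOrderedRing α]

theorem dotProduct_le_supplyRate {Q : Matrix p p α} (hQ : Q.IsSymm) {S : Matrix p m α}
    {R : Matrix m m α} {H : Matrix n p α} {G : Matrix n m α} {f q : n → α} {l : k → α}
    {W : Matrix k m α} (h₁ : Gᵀ *ᵥ q = (2 : α) • ((sHat H Q S G)ᵀ *ᵥ f - Wᵀ *ᵥ l))
    (h₂ : q ⬝ᵥ f = f ⬝ᵥ ((H * Q * Hᵀ) *ᵥ f) - l ⬝ᵥ l) (h₃ : rHat H Q S R G = Wᵀ * W)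
    (u : m → α) :
    q ⬝ᵥ (f + G *ᵥ u) ≤ supplyRate Q S R u (Hᵀ *ᵥ (f + G *ᵥ u)) := by
  rw [supplyRate_eq_dotProduct_add_dotProduct_self hQ h₁ h₂ h₃]
  exact le_add_of_nonneg_right (Finset.sum_nonneg fun i _ => mul_self_nonneg _)

end

theorem dissipation_inequality_of_factorization_general {n : ℕ}
    (f : (Fin n → ℝ) → (Fin n → ℝ))
    (g : (Fin n → ℝ) → Matrix (Fin n) (Fin n) ℝ)
    (Q S R : Matrix (Fin n) (Fin n) ℝ)
    (hQ : Q.IsSymm)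
    (gradV : (Fin n → ℝ) → (Fin n → ℝ))
    (gradh : (Fin n → ℝ) → Matrix (Fin n) (Fin n) ℝ)
    (L : (Fin n → ℝ) → (Fin n → ℝ))
    (W : (Fin n → ℝ) → Matrix (Fin n) (Fin n) ℝ)
    -- (i)  (1/2) g(x)ᵀ∇V(x) = Ŝ(x)ᵀ f(x) − W(x)ᵀ L(x)
    (hyp1 : ∀ x, (1/2 : ℝ) • ((g x)ᵀ *ᵥ gradV x)
      = (gradh x * Q * (gradh x)ᵀ * g x + gradh x * S)ᵀ *ᵥ f x - (W x)ᵀ *ᵥ L x)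
    -- (ii) ∇V(x)ᵀ f(x) = f(x)ᵀ ∇h(x) Q ∇h(x)ᵀ f(x) − L(x)ᵀ L(x)
    (hyp2 : ∀ x, gradV x ⬝ᵥ f x
      = f x ⬝ᵥ ((gradh x * Q * (gradh x)ᵀ) *ᵥ f x) - L x ⬝ᵥ L x)
    -- (iii) R̂(x) = W(x)ᵀ W(x)
    (hyp3 : ∀ x, (g x)ᵀ * gradh x * Q * (gradh x)ᵀ * g x
        + (2 : ℝ) • ((g x)ᵀ * gradh x * S) + R = (W x)ᵀ * W x) :
    ∀ x u : Fin n → ℝ,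
      gradV x ⬝ᵥ (f x + g x *ᵥ u) ≤
        ((gradh x)ᵀ *ᵥ (f x + g x *ᵥ u)) ⬝ᵥ (Q *ᵥ ((gradh x)ᵀ *ᵥ (f x + g x *ᵥ u)))
          + 2 * (((gradh x)ᵀ *ᵥ (f x + g x *ᵥ u)) ⬝ᵥ (S *ᵥ u))
          + u ⬝ᵥ (R *ᵥ u) := by
  intro x u
  have h₁ : (g x)ᵀ *ᵥ gradV x =
      (2 : ℝ) • ((sHat (gradh x) Q S (g x))ᵀ *ᵥ f x - (W x)ᵀ *ᵥ L x) := by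
    rw [sHat, ← hyp1 x, smul_smul]
    norm_num
  exact dotProduct_le_supplyRate hQ h₁ (hyp2 x) (hyp3 x) u

/-- For the input affine system ẋ = f(x) + g(x)u, y = h(x), if a
nonnegative differentiable storage function `V` with `V 0 = 0` satisfies the
three algebraic identities of Theorem 3.3 (with factorization data `L`, `W`),
then the differential dissipation inequality
`∇V(x)ᵀ(f(x) + g(x)u) ≤ ω(u, ẏ)` holds for all `x`, `u`, where
`ẏ = ∇h(x)ᵀ(f(x) + g(x)u)` and `ω(u, ẏ) = ẏᵀQẏ + 2ẏᵀSu + uᵀRu`. -/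
theorem dissipation_inequality_of_factorization {n : ℕ}
    (f : (Fin n → ℝ) → (Fin n → ℝ))
    (g : (Fin n → ℝ) → Matrix (Fin n) (Fin n) ℝ)
    (h : (Fin n → ℝ) → (Fin n → ℝ))
    (hf0 : f 0 = 0) (hh0 : h 0 = 0)
    (Q S R : Matrix (Fin n) (Fin n) ℝ)
    (hQ : Q.IsSymm) (hR : R.IsSymm)
    (V : (Fin n → ℝ) → ℝ)
    (gradV : (Fin n → ℝ) → (Fin n → ℝ))
    (gradh : (Fin n → ℝ) → Matrix (Fin n) (Fin n) ℝ)
    (hVdiff : Differentiable ℝ V)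
    (hVgrad : ∀ x v, fderiv ℝ V x v = gradV x ⬝ᵥ v)
    (hhdiff : Differentiable ℝ h)
    (hhgrad : ∀ x v, fderiv ℝ h x v = (gradh x)ᵀ *ᵥ v)
    (hVnonneg : ∀ x, 0 ≤ V x) (hV0 : V 0 = 0)
    (L : (Fin n → ℝ) → (Fin n → ℝ))
    (W : (Fin n → ℝ) → Matrix (Fin n) (Fin n) ℝ)
    -- (i)  (1/2) g(x)ᵀ∇V(x) = Ŝ(x)ᵀ f(x) − W(x)ᵀ L(x)
    (hyp1 : ∀ x, (1/2 : ℝ) • ((g x)ᵀ *ᵥ gradV x)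
      = (gradh x * Q * (gradh x)ᵀ * g x + gradh x * S)ᵀ *ᵥ f x - (W x)ᵀ *ᵥ L x)
    -- (ii) ∇V(x)ᵀ f(x) = f(x)ᵀ ∇h(x) Q ∇h(x)ᵀ f(x) − L(x)ᵀ L(x)
    (hyp2 : ∀ x, gradV x ⬝ᵥ f x
      = f x ⬝ᵥ ((gradh x * Q * (gradh x)ᵀ) *ᵥ f x) - L x ⬝ᵥ L x)
    -- (iii) R̂(x) = W(x)ᵀ W(x)
    (hyp3 : ∀ x, (g x)ᵀ * gradh x * Q * (gradh x)ᵀ * g x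
        + (2 : ℝ) • ((g x)ᵀ * gradh x * S) + R = (W x)ᵀ * W x) :
    ∀ x u : Fin n → ℝ,
      gradV x ⬝ᵥ (f x + g x *ᵥ u) ≤
        ((gradh x)ᵀ *ᵥ (f x + g x *ᵥ u)) ⬝ᵥ (Q *ᵥ ((gradh x)ᵀ *ᵥ (f x + g x *ᵥ u)))
          + 2 * (((gradh x)ᵀ *ᵥ (f x + g x *ᵥ u)) ⬝ᵥ (S *ᵥ u))
          + u ⬝ᵥ (R *ᵥ u) :=
  dissipation_inequality_of_factorization_general f g Q S R hQ gradV gradh L W hyp1 hyp2 hyp3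
end

section
/- Consider the input affine system ẋ = f(x) + g(x)u, y = h(x). Suppose V : ℝⁿ → ℝ is differentiable with V(x) ≥ 0 for all x and V(0) = 0, and there exist functions L : ℝⁿ → ℝⁿ and W : ℝⁿ → ℝ^{n×n} satisfying, for all x: (1/2) g(x)ᵀ∇V(x) = Ŝ(x)ᵀ f(x) − W(x)ᵀ L(x), ∇V(x)ᵀ f(x) = f(x)ᵀ ∇h(x) Q ∇h(x)ᵀ f(x) − L(x)ᵀ L(x), and R̂(x) = W(x)ᵀ W(x), where Ŝ(x) = ∇h(x) Q ∇h(x)ᵀ g(x) + ∇h(x) S and R̂(x) = g(x)ᵀ ∇h(x) Q ∇h(x)ᵀ g(x) + 2 g(x)ᵀ ∇h(x) S + R. Then along any continuously differentiable trajectory x : [0, t] → ℝⁿ with continuous control u : [0, t] → ℝⁿ satisfying ẋ(s) = f(x(s)) + g(x(s))u(s) for all s ∈ [0, t], the integral dissipation inequality V(x(t)) − V(x(0)) ≤ ∫₀ᵗ ω(u(s), ẏ(s)) ds holds, where ẏ(s) = ∇h(x(s))ᵀ ẋ(s). -/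
open Matrix


lemma flipdot {n : ℕ} (X : Matrix (Fin n) (Fin n) ℝ) (v w : Fin n → ℝ) :
    (X *ᵥ v) ⬝ᵥ w = v ⬝ᵥ (Xᵀ *ᵥ w) := by
  rw [dotProduct_comm, Matrix.dotProduct_mulVec, ← Matrix.mulVec_transpose, dotProduct_comm]

lemma key_eq {n : ℕ} (Q S R : Matrix (Fin n) (Fin n) ℝ) (hQ : Qᵀ = Q)
    (G gp Wm : Matrix (Fin n) (Fin n) ℝ) (a b Lv gV : Fin n → ℝ)
    (h1 : (1/2:ℝ) • (gpᵀ *ᵥ gV) = (G*Q*Gᵀ*gp + G*S)ᵀ *ᵥ a - Wmᵀ *ᵥ Lv)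
    (h2 : gV ⬝ᵥ a = a ⬝ᵥ ((G*Q*Gᵀ) *ᵥ a) - Lv ⬝ᵥ Lv)
    (h3 : gpᵀ*G*Q*Gᵀ*gp + (2:ℝ)•(gpᵀ*G*S) + R = Wmᵀ*Wm) :
    (Gᵀ *ᵥ (a + gp *ᵥ b)) ⬝ᵥ (Q *ᵥ (Gᵀ *ᵥ (a + gp *ᵥ b)))
      + 2 * ((Gᵀ *ᵥ (a + gp *ᵥ b)) ⬝ᵥ (S *ᵥ b)) + b ⬝ᵥ (R *ᵥ b)
      - gV ⬝ᵥ (a + gp *ᵥ b)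
      = (Lv + Wm *ᵥ b) ⬝ᵥ (Lv + Wm *ᵥ b) := by
  have e1 : ((1/2:ℝ) • (gpᵀ *ᵥ gV)) ⬝ᵥ b
      = ((G*Q*Gᵀ*gp + G*S)ᵀ *ᵥ a - Wmᵀ *ᵥ Lv) ⬝ᵥ b := by rw [h1]
  have e3 : b ⬝ᵥ ((gpᵀ*G*Q*Gᵀ*gp + (2:ℝ)•(gpᵀ*G*S) + R) *ᵥ b)
      = b ⬝ᵥ ((Wmᵀ*Wm) *ᵥ b) := by rw [h3]
  have f1 : b ⬝ᵥ ((gpᵀ * (G * (Q * Gᵀ))) *ᵥ a) = a ⬝ᵥ ((G * (Q * (Gᵀ * gp))) *ᵥ b) := by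
    rw [dotProduct_comm, flipdot]
    congr 1
    simp [Matrix.transpose_mul, Matrix.transpose_transpose, hQ, Matrix.mul_assoc]
  have f2 : b ⬝ᵥ (Wmᵀ *ᵥ Lv) = Lv ⬝ᵥ (Wm *ᵥ b) := by
    rw [dotProduct_comm, flipdot, Matrix.transpose_transpose]
  simp only [flipdot, Matrix.mulVec_add, Matrix.add_mulVec, Matrix.sub_mulVec,
    dotProduct_add, add_dotProduct, sub_dotProduct, dotProduct_sub,
    smul_dotProduct, dotProduct_smul, Matrix.smul_mulVec,
    Matrix.mulVec_mulVec, Matrix.transpose_mul, Matrix.transpose_transpose,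
    Matrix.transpose_smul, smul_eq_mul, Matrix.mul_assoc] at e1 e3 h2 f1 f2 ⊢
  linarith [e1, e3, h2, f1, f2]

lemma contOn_dot {n : ℕ} {v w : ℝ → (Fin n → ℝ)} {s : Set ℝ}
    (hv : ContinuousOn v s) (hw : ContinuousOn w s) :
    ContinuousOn (fun r => v r ⬝ᵥ w r) s := by
  simp only [dotProduct]
  apply continuousOn_finset_sum
  intro i _
  exact (((continuous_apply i).comp_continuousOn hv).mul
    ((continuous_apply i).comp_continuousOn hw))

lemma contOn_mulVec {n : ℕ} {A : ℝ → Matrix (Fin n) (Fin n) ℝ} {v : ℝ → (Fin n → ℝ)}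
    {s : Set ℝ} (hA : ContinuousOn A s) (hv : ContinuousOn v s) :
    ContinuousOn (fun r => A r *ᵥ v r) s := by
  apply continuousOn_pi.2
  intro i
  simp only [Matrix.mulVec, dotProduct]
  apply continuousOn_finset_sum
  intro j _
  exact ((continuous_apply_apply i j).comp_continuousOn hA).mul
    ((continuous_apply j).comp_continuousOn hv)

/-- For the input affine system ẋ = f(x) + g(x)u, y = h(x), if a
nonnegative C¹ storage function `V` with `V 0 = 0` satisfies the three
algebraic identities of Theorem 3.3 (with factorization data `L`, `W`), then
along any C¹ trajectory `x` with continuous control `u` on `[0, t]` solving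
`ẋ(s) = f(x(s)) + g(x(s))u(s)`, the integral dissipation inequality
`V(x(t)) − V(x(0)) ≤ ∫₀ᵗ ω(u(s), ẏ(s)) ds` holds, where
`ẏ(s) = ∇h(x(s))ᵀ ẋ(s)` and `ω(u, ẏ) = ẏᵀQẏ + 2ẏᵀSu + uᵀRu`. -/
theorem integral_dissipation_inequality_of_factorization {n : ℕ}
    (f : (Fin n → ℝ) → (Fin n → ℝ))
    (g : (Fin n → ℝ) → Matrix (Fin n) (Fin n) ℝ)
    (h : (Fin n → ℝ) → (Fin n → ℝ))
    (hf0 : f 0 = 0) (hh0 : h 0 = 0)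
    (hfc : Continuous f) (hgc : Continuous g)
    (hhsmooth : ContDiff ℝ (⊤ : ℕ∞) h)
    (Q S R : Matrix (Fin n) (Fin n) ℝ)
    (hQ : Q.IsSymm) (hR : R.IsSymm)
    (V : (Fin n → ℝ) → ℝ)
    (gradV : (Fin n → ℝ) → (Fin n → ℝ))
    (gradh : (Fin n → ℝ) → Matrix (Fin n) (Fin n) ℝ)
    (hVC1 : ContDiff ℝ 1 V)
    (hVgrad : ∀ x v, fderiv ℝ V x v = gradV x ⬝ᵥ v)
    (hhgrad : ∀ x v, fderiv ℝ h x v = (gradh x)ᵀ *ᵥ v)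
    (hVnonneg : ∀ x, 0 ≤ V x) (hV0 : V 0 = 0)
    (L : (Fin n → ℝ) → (Fin n → ℝ))
    (W : (Fin n → ℝ) → Matrix (Fin n) (Fin n) ℝ)
    -- (i)  (1/2) g(x)ᵀ∇V(x) = Ŝ(x)ᵀ f(x) − W(x)ᵀ L(x)
    (hyp1 : ∀ x, (1/2 : ℝ) • ((g x)ᵀ *ᵥ gradV x)
      = (gradh x * Q * (gradh x)ᵀ * g x + gradh x * S)ᵀ *ᵥ f x - (W x)ᵀ *ᵥ L x)
    -- (ii) ∇V(x)ᵀ f(x) = f(x)ᵀ ∇h(x) Q ∇h(x)ᵀ f(x) − L(x)ᵀ L(x)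
    (hyp2 : ∀ x, gradV x ⬝ᵥ f x
      = f x ⬝ᵥ ((gradh x * Q * (gradh x)ᵀ) *ᵥ f x) - L x ⬝ᵥ L x)
    -- (iii) R̂(x) = W(x)ᵀ W(x)
    (hyp3 : ∀ x, (g x)ᵀ * gradh x * Q * (gradh x)ᵀ * g x
        + (2 : ℝ) • ((g x)ᵀ * gradh x * S) + R = (W x)ᵀ * W x)
    -- trajectory data on [0, t]
    (t : ℝ) (ht : 0 ≤ t)
    (x : ℝ → (Fin n → ℝ)) (u : ℝ → (Fin n → ℝ))
    (hu : ContinuousOn u (Set.Icc 0 t))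
    (hxtraj : ∀ s ∈ Set.Icc (0 : ℝ) t,
      HasDerivAt x (f (x s) + g (x s) *ᵥ u s) s) :
    V (x t) - V (x 0) ≤ ∫ s in (0 : ℝ)..t,
      (((gradh (x s))ᵀ *ᵥ (f (x s) + g (x s) *ᵥ u s)) ⬝ᵥ
          (Q *ᵥ ((gradh (x s))ᵀ *ᵥ (f (x s) + g (x s) *ᵥ u s)))
        + 2 * (((gradh (x s))ᵀ *ᵥ (f (x s) + g (x s) *ᵥ u s)) ⬝ᵥ (S *ᵥ u s))
        + u s ⬝ᵥ (R *ᵥ u s)) := by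
  set I := Set.Icc (0:ℝ) t with hI
  set X' : ℝ → (Fin n → ℝ) := fun s => f (x s) + g (x s) *ᵥ u s with hX'
  -- continuity facts
  have hxcont : ContinuousOn x I := fun s hs =>
    (hxtraj s hs).continuousAt.continuousWithinAt
  have hX'cont : ContinuousOn X' I := by
    apply ContinuousOn.add
    · exact hfc.comp_continuousOn hxcont
    · exact contOn_mulVec (hgc.comp_continuousOn hxcont) hu
  -- the derivative of V ∘ x
  set φ : ℝ → ℝ := fun s => gradV (x s) ⬝ᵥ X' s with hφ
  have hφcont : ContinuousOn φ I := by
    have h1 : ContinuousOn (fun s => fderiv ℝ V (x s)) I :=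
      (hVC1.continuous_fderiv one_ne_zero).comp_continuousOn hxcont
    have h2 : ContinuousOn (fun s => fderiv ℝ V (x s) (X' s)) I :=
      h1.clm_apply hX'cont
    have : ∀ s, fderiv ℝ V (x s) (X' s) = φ s := fun s => hVgrad (x s) (X' s)
    simpa [this] using h2
  have hderiv : ∀ s ∈ I, HasDerivAt (fun r => V (x r)) (φ s) s := by
    intro s hs
    have hxd := hxtraj s hs
    have hVd : HasFDerivAt V (fderiv ℝ V (x s)) (x s) :=
      ((hVC1.differentiable one_ne_zero) (x s)).hasFDerivAt
    have h2 : HasDerivAt (fun r => V (x r)) (fderiv ℝ V (x s) (X' s)) s :=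
      hVd.comp_hasDerivAt s hxd
    rw [hVgrad] at h2
    exact h2
  -- the supply rate integrand
  set ω : ℝ → ℝ := fun s =>
      ((gradh (x s))ᵀ *ᵥ X' s) ⬝ᵥ (Q *ᵥ ((gradh (x s))ᵀ *ᵥ X' s))
      + 2 * (((gradh (x s))ᵀ *ᵥ X' s) ⬝ᵥ (S *ᵥ u s)) + u s ⬝ᵥ (R *ᵥ u s) with hω
  have hycont : ContinuousOn (fun s => (gradh (x s))ᵀ *ᵥ X' s) I := by
    have h1 : ContinuousOn (fun s => fderiv ℝ h (x s)) I :=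
      (hhsmooth.continuous_fderiv (by simp)).comp_continuousOn hxcont
    have h2 : ContinuousOn (fun s => fderiv ℝ h (x s) (X' s)) I :=
      h1.clm_apply hX'cont
    have : ∀ s, fderiv ℝ h (x s) (X' s) = (gradh (x s))ᵀ *ᵥ X' s := fun s =>
      hhgrad (x s) (X' s)
    simpa [this] using h2
  have hωcont : ContinuousOn ω I := by
    apply ContinuousOn.add
    apply ContinuousOn.add
    · exact contOn_dot hycont (contOn_mulVec continuousOn_const hycont)
    · exact (continuousOn_const.mul
        (contOn_dot hycont (contOn_mulVec continuousOn_const hu)))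
    · exact contOn_dot hu (contOn_mulVec continuousOn_const hu)
  -- integrability
  have huIcc : Set.uIcc (0:ℝ) t = I := Set.uIcc_of_le ht
  have hφint : IntervalIntegrable φ MeasureTheory.volume 0 t := by
    apply ContinuousOn.intervalIntegrable
    rwa [huIcc]
  have hωint : IntervalIntegrable ω MeasureTheory.volume 0 t := by
    apply ContinuousOn.intervalIntegrable
    rwa [huIcc]
  -- FTC
  have hFTC : (∫ s in (0:ℝ)..t, φ s) = V (x t) - V (x 0) := by
    apply intervalIntegral.integral_eq_sub_of_hasDerivAt
    · intro s hs
      exact hderiv s (huIcc ▸ hs)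
    · exact hφint
  -- pointwise dissipation
  have hpt : ∀ s ∈ I, φ s ≤ ω s := by
    intro s hs
    have key := key_eq Q S R hQ (gradh (x s)) (g (x s)) (W (x s))
      (f (x s)) (u s) (L (x s)) (gradV (x s))
      (hyp1 (x s)) (hyp2 (x s)) (hyp3 (x s))
    have hnn : (0:ℝ) ≤ (L (x s) + W (x s) *ᵥ u s) ⬝ᵥ (L (x s) + W (x s) *ᵥ u s) :=
      Finset.sum_nonneg fun _ _ => mul_self_nonneg _
    simp only [hφ, hω, hX']
    linarith [key, hnn]
  calc V (x t) - V (x 0) = ∫ s in (0:ℝ)..t, φ s := hFTC.symm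
    _ ≤ ∫ s in (0:ℝ)..t, ω s :=
        intervalIntegral.integral_mono_on ht hφint hωint hpt
end

section
/- Consider the input affine system ẋ = f(x) + g(x)u, y = h(x). Suppose V : ℝⁿ → ℝ is differentiable with V(x) ≥ 0 for all x and V(0) = 0, and suppose the differential dissipation inequality ∇V(x)ᵀ (f(x) + g(x)u) ≤ ω(u, ẏ) holds for all x, u ∈ ℝⁿ, where ẏ = ∇h(x)ᵀ (f(x) + g(x)u). Then there exist an integer q ≥ 1 and functions L : ℝⁿ → ℝ^q and W : ℝⁿ → ℝ^{q×n} such that for all x ∈ ℝⁿ: (i) (1/2) g(x)ᵀ∇V(x) = Ŝ(x)ᵀ f(x) − W(x)ᵀ L(x), (ii) ∇V(x)ᵀ f(x) = f(x)ᵀ ∇h(x) Q ∇h(x)ᵀ f(x) − L(x)ᵀ L(x), and (iii) W(x)ᵀ W(x) equals the symmetric part of R̂(x), where Ŝ(x) = ∇h(x) Q ∇h(x)ᵀ g(x) + ∇h(x) S and R̂(x) = g(x)ᵀ ∇h(x) Q ∇h(x)ᵀ g(x) + 2 g(x)ᵀ ∇h(x) S + R. -/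
/-!
At a fixed state `x`, the slack `ω(u, ẏ) - ∇V(x)ᵀ(f(x) + g(x)u)` of the dissipation inequality is
an inhomogeneous quadratic `c + 2 bᵀu + uᵀAu` in the input `u`, where `c`, `b` and `A` are the
defects in (ii), (i) and (iii). A quadratic that is nonnegative for every `u` has a positive
semidefinite bordered matrix `[[c, bᵀ], [b, A]]`, and a Gram factorization `BᵀB` of that matrix
yields `L(x)` as the first column of `B` and `W(x)` as the remaining ones.
-/

open Matrix Filter Topology

lemma nonneg_homogenized_quadratic {c β α : ℝ} (h : ∀ s, 0 ≤ c + 2 * β * s + α * s ^ 2)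
    (t : ℝ) : 0 ≤ c * t ^ 2 + 2 * β * t + α := by
  have hne : ∀ t ≠ 0, 0 ≤ c * t ^ 2 + 2 * β * t + α := fun t ht => by
    have key : c * t ^ 2 + 2 * β * t + α = t ^ 2 * (c + 2 * β * t⁻¹ + α * t⁻¹ ^ 2) := by
      field_simp
    exact key ▸ mul_nonneg (sq_nonneg t) (h t⁻¹)
  rcases eq_or_ne t 0 with rfl | ht
  · have hlim : Tendsto (fun t : ℝ => c * t ^ 2 + 2 * β * t + α) (𝓝[≠] 0)
        (𝓝 (c * 0 ^ 2 + 2 * β * 0 + α)) :=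
      ((by fun_prop : Continuous fun t : ℝ => c * t ^ 2 + 2 * β * t + α).tendsto 0).mono_left
        nhdsWithin_le_nhds
    exact ge_of_tendsto hlim (eventually_nhdsWithin_of_forall hne)
  · exact hne t ht

noncomputable def symmPart {p : Type*} (M : Matrix p p ℝ) : Matrix p p ℝ :=
  (1 / 2 : ℝ) • (M + Mᵀ)

lemma symmPart_isSymm {p : Type*} (M : Matrix p p ℝ) : (symmPart M).IsSymm := by
  simp only [IsSymm, symmPart, transpose_smul, transpose_add, transpose_transpose, add_comm]

section Algebra

variable {m k p : Type*} [Fintype m] [Fintype k] [Fintype p]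

lemma mulVec_dotProduct (M : Matrix m p ℝ) (x : p → ℝ) (y : m → ℝ) :
    (M *ᵥ x) ⬝ᵥ y = x ⬝ᵥ (Mᵀ *ᵥ y) := by
  rw [dotProduct_comm, dotProduct_transpose_mulVec]

lemma dotProduct_symmPart_mulVec (M : Matrix p p ℝ) (u : p → ℝ) :
    u ⬝ᵥ (symmPart M *ᵥ u) = u ⬝ᵥ (M *ᵥ u) := by
  simp only [symmPart, smul_mulVec, add_mulVec, dotProduct_smul, dotProduct_add,
    dotProduct_transpose_mulVec, smul_eq_mul]
  ring

/-- The supply rate `ω(u, ẏ)` at `ẏ = Hᵀ(F + Gu)`, expanded in powers of `u`. -/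
lemma supplyRate_expand (F : m → ℝ) (u : p → ℝ) (G : Matrix m p ℝ) (H : Matrix m k ℝ)
    {Q : Matrix k k ℝ} (hQ : Q.IsSymm) (S : Matrix k p ℝ) (R : Matrix p p ℝ) :
    (Hᵀ *ᵥ (F + G *ᵥ u)) ⬝ᵥ (Q *ᵥ (Hᵀ *ᵥ (F + G *ᵥ u)))
        + 2 * ((Hᵀ *ᵥ (F + G *ᵥ u)) ⬝ᵥ (S *ᵥ u)) + u ⬝ᵥ (R *ᵥ u)
      = F ⬝ᵥ ((H * Q * Hᵀ) *ᵥ F) + 2 * (((H * Q * Hᵀ * G + H * S)ᵀ *ᵥ F) ⬝ᵥ u)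
        + u ⬝ᵥ ((Gᵀ * H * Q * Hᵀ * G + (2 : ℝ) • (Gᵀ * H * S) + R) *ᵥ u) := by
  have hcross : u ⬝ᵥ (Gᵀ * (H * (Q * Hᵀ))) *ᵥ F = F ⬝ᵥ (H * (Q * (Hᵀ * G))) *ᵥ u := by
    rw [dotProduct_comm, mulVec_dotProduct]
    simp only [transpose_mul, transpose_transpose, hQ.eq, Matrix.mul_assoc]
  simp only [mulVec_add, add_dotProduct, dotProduct_add, add_mulVec, smul_mulVec,
    dotProduct_smul, mulVec_dotProduct, mulVec_mulVec, transpose_transpose, smul_eq_mul,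
    transpose_add, transpose_mul, Matrix.mul_assoc, hcross]
  ring

end Algebra

section Bordered

variable {n : ℕ} (c : ℝ) (b : Fin n → ℝ) (A : Matrix (Fin n) (Fin n) ℝ)

/-- The bordered matrix `[[c, bᵀ], [b, A]]`. -/
def borderedMatrix : Matrix (Fin (n + 1)) (Fin (n + 1)) ℝ :=
  of (vecCons (vecCons c b) fun i => vecCons (b i) (A i))

lemma borderedMatrix_isSymm (hA : A.IsSymm) : (borderedMatrix c b A).IsSymm := by
  ext i j
  refine Fin.cases ?_ (fun i => ?_) i <;> refine Fin.cases ?_ (fun j => ?_) j <;>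
    simp [borderedMatrix]
  exact hA.apply i j

lemma cons_dotProduct_borderedMatrix_mulVec (t : ℝ) (u : Fin n → ℝ) :
    vecCons t u ⬝ᵥ (borderedMatrix c b A *ᵥ vecCons t u)
      = c * t ^ 2 + 2 * (b ⬝ᵥ u) * t + u ⬝ᵥ (A *ᵥ u) := by
  rw [borderedMatrix, cons_mulVec, mulVec_cons, cons_dotProduct_cons, cons_dotProduct_cons]
  change t * (c * t + b ⬝ᵥ u) + u ⬝ᵥ (t • b + A *ᵥ u) = _
  rw [dotProduct_add, dotProduct_smul, smul_eq_mul, dotProduct_comm u b]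
  ring

lemma borderedMatrix_posSemidef (hA : A.IsSymm)
    (h : ∀ u, 0 ≤ c + 2 * (b ⬝ᵥ u) + u ⬝ᵥ (A *ᵥ u)) : (borderedMatrix c b A).PosSemidef := by
  refine .of_dotProduct_mulVec_nonneg (isHermitian_iff_isSymm.mpr
    (borderedMatrix_isSymm c b A hA)) fun v => ?_
  rw [star_trivial, ← cons_head_tail v, cons_dotProduct_borderedMatrix_mulVec]
  refine nonneg_homogenized_quadratic (fun s => ?_) _
  have hs := h (s • vecTail v)
  rw [dotProduct_smul, mulVec_smul, smul_dotProduct, dotProduct_smul, smul_eq_mul, smul_eq_mul,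
    smul_eq_mul] at hs
  linarith

end Bordered

lemma Matrix.PosSemidef.exists_eq_transpose_mul_self {ι : Type*} [Fintype ι] [DecidableEq ι]
    {M : Matrix ι ι ℝ} (hM : M.PosSemidef) : ∃ B : Matrix ι ι ℝ, M = Bᵀ * B := by
  open scoped MatrixOrder in
  obtain ⟨B, hB⟩ := CStarAlgebra.nonneg_iff_eq_star_mul_self.mp hM.nonneg
  exact ⟨B, hB.trans (by rw [star_eq_conjTranspose, conjTranspose_eq_transpose_of_trivial])⟩

lemma exists_gram_factorization_of_nonneg_quadratic {n : ℕ} (c : ℝ) (b : Fin n → ℝ)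
    {A : Matrix (Fin n) (Fin n) ℝ} (hA : A.IsSymm)
    (h : ∀ u, 0 ≤ c + 2 * (b ⬝ᵥ u) + u ⬝ᵥ (A *ᵥ u)) :
    ∃ (l : Fin (n + 1) → ℝ) (W : Matrix (Fin (n + 1)) (Fin n) ℝ),
      l ⬝ᵥ l = c ∧ Wᵀ *ᵥ l = b ∧ Wᵀ * W = A := by
  obtain ⟨B, hB⟩ := (borderedMatrix_posSemidef c b A hA h).exists_eq_transpose_mul_self
  have hentry : ∀ i j, (Bᵀ * B) i j = borderedMatrix c b A i j := fun i j => by rw [hB]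
  refine ⟨Bᵀ 0, B.submatrix id Fin.succ, ?_, funext fun j => ?_, ext fun i j => ?_⟩
  · simpa [borderedMatrix, mul_apply, dotProduct] using hentry 0 0
  · simpa [borderedMatrix, mul_apply, mulVec, dotProduct] using hentry j.succ 0
  · simpa [borderedMatrix, mul_apply] using hentry i.succ j.succ

theorem factorization_of_dissipation_inequality_general {n : ℕ}
    (f : (Fin n → ℝ) → (Fin n → ℝ))
    (g : (Fin n → ℝ) → Matrix (Fin n) (Fin n) ℝ)
    (Q S R : Matrix (Fin n) (Fin n) ℝ)
    (hQ : Q.IsSymm)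
    (gradV : (Fin n → ℝ) → (Fin n → ℝ))
    (gradh : (Fin n → ℝ) → Matrix (Fin n) (Fin n) ℝ)
    (hdissip : ∀ x u : Fin n → ℝ,
      gradV x ⬝ᵥ (f x + g x *ᵥ u) ≤
        ((gradh x)ᵀ *ᵥ (f x + g x *ᵥ u)) ⬝ᵥ (Q *ᵥ ((gradh x)ᵀ *ᵥ (f x + g x *ᵥ u)))
          + 2 * (((gradh x)ᵀ *ᵥ (f x + g x *ᵥ u)) ⬝ᵥ (S *ᵥ u))
          + u ⬝ᵥ (R *ᵥ u)) :
    ∃ q : ℕ, 1 ≤ q ∧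
      ∃ (L : (Fin n → ℝ) → (Fin q → ℝ)) (W : (Fin n → ℝ) → Matrix (Fin q) (Fin n) ℝ),
        ∀ x : Fin n → ℝ,
          -- (i)  (1/2) g(x)ᵀ∇V(x) = Ŝ(x)ᵀ f(x) − W(x)ᵀ L(x)
          (1/2 : ℝ) • ((g x)ᵀ *ᵥ gradV x)
              = (gradh x * Q * (gradh x)ᵀ * g x + gradh x * S)ᵀ *ᵥ f x - (W x)ᵀ *ᵥ L x
          -- (ii) ∇V(x)ᵀ f(x) = f(x)ᵀ ∇h(x) Q ∇h(x)ᵀ f(x) − L(x)ᵀ L(x)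
          ∧ gradV x ⬝ᵥ f x
              = f x ⬝ᵥ ((gradh x * Q * (gradh x)ᵀ) *ᵥ f x) - L x ⬝ᵥ L x
          -- (iii) W(x)ᵀ W(x) = symmetric part of R̂(x)
          ∧ (W x)ᵀ * W x
              = (1/2 : ℝ) •
                ((g x)ᵀ * gradh x * Q * (gradh x)ᵀ * g x
                    + (2 : ℝ) • ((g x)ᵀ * gradh x * S) + R
                  + ((g x)ᵀ * gradh x * Q * (gradh x)ᵀ * g x
                    + (2 : ℝ) • ((g x)ᵀ * gradh x * S) + R)ᵀ) := by
  have hfactor : ∀ x, ∃ (l : Fin (n + 1) → ℝ) (W : Matrix (Fin (n + 1)) (Fin n) ℝ),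
      l ⬝ᵥ l = f x ⬝ᵥ ((gradh x * Q * (gradh x)ᵀ) *ᵥ f x) - gradV x ⬝ᵥ f x ∧
      Wᵀ *ᵥ l = (gradh x * Q * (gradh x)ᵀ * g x + gradh x * S)ᵀ *ᵥ f x
        - (1 / 2 : ℝ) • ((g x)ᵀ *ᵥ gradV x) ∧
      Wᵀ * W = symmPart ((g x)ᵀ * gradh x * Q * (gradh x)ᵀ * g x
        + (2 : ℝ) • ((g x)ᵀ * gradh x * S) + R) := fun x =>
    exists_gram_factorization_of_nonneg_quadratic _ _ (symmPart_isSymm _) fun u => by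
      have hdissip_xu := hdissip x u
      rw [supplyRate_expand _ _ _ _ hQ, dotProduct_add] at hdissip_xu
      rw [dotProduct_symmPart_mulVec, sub_dotProduct, smul_dotProduct, mulVec_dotProduct (g x)ᵀ,
        transpose_transpose, smul_eq_mul]
      linarith
  choose L W hL hWL hW using hfactor
  refine ⟨n + 1, by omega, L, W, fun x => ⟨?_, ?_, hW x⟩⟩
  · rw [hWL x]
    module
  · rw [hL x]
    ring

/-- For the input affine system ẋ = f(x) + g(x)u, y = h(x), if a
nonnegative differentiable storage function `V` with `V 0 = 0` satisfies the
differential dissipation inequality `∇V(x)ᵀ(f(x) + g(x)u) ≤ ω(u, ẏ)` for all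
`x`, `u` (with `ẏ = ∇h(x)ᵀ(f(x) + g(x)u)`), then there exist `q ≥ 1` and
functions `L : ℝⁿ → ℝ^q`, `W : ℝⁿ → ℝ^{q×n}` realizing the algebraic
identities of Theorem 3.3, with `W(x)ᵀW(x)` equal to the symmetric part of
`R̂(x)`. -/
theorem factorization_of_dissipation_inequality {n : ℕ}
    (f : (Fin n → ℝ) → (Fin n → ℝ))
    (g : (Fin n → ℝ) → Matrix (Fin n) (Fin n) ℝ)
    (h : (Fin n → ℝ) → (Fin n → ℝ))
    (hf0 : f 0 = 0) (hh0 : h 0 = 0)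
    (Q S R : Matrix (Fin n) (Fin n) ℝ)
    (hQ : Q.IsSymm) (hR : R.IsSymm)
    (V : (Fin n → ℝ) → ℝ)
    (gradV : (Fin n → ℝ) → (Fin n → ℝ))
    (gradh : (Fin n → ℝ) → Matrix (Fin n) (Fin n) ℝ)
    (hVdiff : Differentiable ℝ V)
    (hVgrad : ∀ x v, fderiv ℝ V x v = gradV x ⬝ᵥ v)
    (hhdiff : Differentiable ℝ h)
    (hhgrad : ∀ x v, fderiv ℝ h x v = (gradh x)ᵀ *ᵥ v)
    (hVnonneg : ∀ x, 0 ≤ V x) (hV0 : V 0 = 0)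
    (hdissip : ∀ x u : Fin n → ℝ,
      gradV x ⬝ᵥ (f x + g x *ᵥ u) ≤
        ((gradh x)ᵀ *ᵥ (f x + g x *ᵥ u)) ⬝ᵥ (Q *ᵥ ((gradh x)ᵀ *ᵥ (f x + g x *ᵥ u)))
          + 2 * (((gradh x)ᵀ *ᵥ (f x + g x *ᵥ u)) ⬝ᵥ (S *ᵥ u))
          + u ⬝ᵥ (R *ᵥ u)) :
    ∃ q : ℕ, 1 ≤ q ∧
      ∃ (L : (Fin n → ℝ) → (Fin q → ℝ)) (W : (Fin n → ℝ) → Matrix (Fin q) (Fin n) ℝ),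
        ∀ x : Fin n → ℝ,
          -- (i)  (1/2) g(x)ᵀ∇V(x) = Ŝ(x)ᵀ f(x) − W(x)ᵀ L(x)
          (1/2 : ℝ) • ((g x)ᵀ *ᵥ gradV x)
              = (gradh x * Q * (gradh x)ᵀ * g x + gradh x * S)ᵀ *ᵥ f x - (W x)ᵀ *ᵥ L x
          -- (ii) ∇V(x)ᵀ f(x) = f(x)ᵀ ∇h(x) Q ∇h(x)ᵀ f(x) − L(x)ᵀ L(x)
          ∧ gradV x ⬝ᵥ f x
              = f x ⬝ᵥ ((gradh x * Q * (gradh x)ᵀ) *ᵥ f x) - L x ⬝ᵥ L x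
          -- (iii) W(x)ᵀ W(x) = symmetric part of R̂(x)
          ∧ (W x)ᵀ * W x
              = (1/2 : ℝ) •
                ((g x)ᵀ * gradh x * Q * (gradh x)ᵀ * g x
                    + (2 : ℝ) • ((g x)ᵀ * gradh x * S) + R
                  + ((g x)ᵀ * gradh x * Q * (gradh x)ᵀ * g x
                    + (2 : ℝ) • ((g x)ᵀ * gradh x * S) + R)ᵀ) :=
  factorization_of_dissipation_inequality_general f g Q S R hQ gradV gradh hdissip
end

section
/- Consider the input affine system ẋ = f(x) + g(x)u, y = h(x), and let V : ℝⁿ → ℝ be a nonnegative continuously differentiable function with V(0) = 0. Assume that g(x)ᵀ∇h(x) = I for all x ∈ ℝⁿ, and that f(x)ᵀ∇h(x)∇h(x)ᵀf(x) − 2∇V(x)ᵀf(x) − 4h(x)ᵀh(x) = 0 for all x ∈ ℝⁿ. Then the negative imaginary dissipation inequality ∇V(x)ᵀ(f(x) + g(x)u) ≤ uᵀ∇h(x)ᵀ(f(x) + g(x)u) holds for all x, u ∈ ℝⁿ if and only if the L₂-gain ≤ 1 dissipation inequality ∇V(x)ᵀ(f(x) + g(x)u) ≤ uᵀu − h(x)ᵀh(x)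 holds for all x, u ∈ ℝⁿ. -/
open Matrix

/-! Write `p = ∇h(x)ᵀ f(x)` and `q = g(x)ᵀ ∇V(x)`. Since `g(x)ᵀ ∇h(x) = I`, the supply
rates become quadratic polynomials in `u`: the storage derivative is `p ⬝ q + q ⬝ u` and
`∇h(x)ᵀ ẋ = p + u`. Completing the square, each dissipation inequality holds for all `u`
iff its discriminant is nonpositive; for the negative imaginary one this discriminant is
`|p + q|²` directly, and for the L₂-gain one it becomes `|p + q|²` after eliminating
`h(x) ⬝ h(x)` with the second identity. -/

section QuadraticForm

variable {𝕜 ι : Type*} [Field 𝕜] [LinearOrder 𝕜] [IsStrictOrderedRing 𝕜] [Fintype ι]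

theorem dotProduct_self_nonneg (v : ι → 𝕜) : 0 ≤ v ⬝ᵥ v :=
  Finset.sum_nonneg fun i _ => mul_self_nonneg (v i)

theorem forall_dotProduct_self_add_dotProduct_add_nonneg_iff (a : ι → 𝕜) (c : 𝕜) :
    (∀ u, 0 ≤ u ⬝ᵥ u + a ⬝ᵥ u + c) ↔ a ⬝ᵥ a ≤ 4 * c := by
  constructor
  · intro hu
    have := hu (-(2⁻¹ : 𝕜) • a)
    simp only [smul_dotProduct, dotProduct_smul, smul_eq_mul] at this
    linarith
  · intro hac u
    have := dotProduct_self_nonneg (u + (2⁻¹ : 𝕜) • a)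
    simp only [add_dotProduct, dotProduct_add, smul_dotProduct, dotProduct_smul,
      smul_eq_mul, dotProduct_comm u a] at this
    linarith

end QuadraticForm

theorem dotProduct_mul_transpose_mulVec {R ι : Type*} [CommSemiring R] [Fintype ι]
    (H : Matrix ι ι R) (f : ι → R) :
    f ⬝ᵥ ((H * Hᵀ) *ᵥ f) = (Hᵀ *ᵥ f) ⬝ᵥ (Hᵀ *ᵥ f) := by
  rw [← mulVec_mulVec, dotProduct_mulVec, mulVec_transpose]

section LeftInverse

variable {R ι : Type*} [CommRing R] [Fintype ι] [DecidableEq ι] {G H : Matrix ι ι R}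

theorem mul_transpose_eq_one_of_transpose_mul_eq_one (hGH : Gᵀ * H = 1) : G * Hᵀ = 1 := by
  rw [← transpose_transpose G, ← transpose_mul, mul_eq_one_comm.mp hGH, transpose_one]

theorem dotProduct_eq_transpose_mulVec_dotProduct (hGH : Gᵀ * H = 1) (w f : ι → R) :
    w ⬝ᵥ f = (Hᵀ *ᵥ f) ⬝ᵥ (Gᵀ *ᵥ w) := by
  rw [mulVec_transpose, dotProduct_mulVec, vecMul_vecMul, mul_eq_one_comm.mp hGH,
    vecMul_one, dotProduct_comm]

theorem transpose_mulVec_mulVec_eq_self (hGH : Gᵀ * H = 1) (u : ι → R) :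
    Hᵀ *ᵥ (G *ᵥ u) = u := by
  rw [mulVec_mulVec, mul_eq_one_comm.mp (mul_transpose_eq_one_of_transpose_mul_eq_one hGH),
    one_mulVec]

theorem dotProduct_add_mulVec_eq (hGH : Gᵀ * H = 1) (w f u : ι → R) :
    w ⬝ᵥ (f + G *ᵥ u) = (Hᵀ *ᵥ f) ⬝ᵥ (Gᵀ *ᵥ w) + (Gᵀ *ᵥ w) ⬝ᵥ u := by
  rw [dotProduct_add, dotProduct_eq_transpose_mulVec_dotProduct hGH w f,
    dotProduct_mulVec w G u, ← mulVec_transpose G w]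

end LeftInverse

section Dissipativity

variable {𝕜 ι : Type*} [Field 𝕜] [LinearOrder 𝕜] [IsStrictOrderedRing 𝕜]
  [Fintype ι] [DecidableEq ι] {G H : Matrix ι ι 𝕜}

theorem forall_negativeImaginary_ineq_iff (hGH : Gᵀ * H = 1) (f w : ι → 𝕜) :
    (∀ u, w ⬝ᵥ (f + G *ᵥ u) ≤ u ⬝ᵥ (Hᵀ *ᵥ (f + G *ᵥ u))) ↔
      (Hᵀ *ᵥ f + Gᵀ *ᵥ w) ⬝ᵥ (Hᵀ *ᵥ f + Gᵀ *ᵥ w) ≤ 0 := by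
  set p := Hᵀ *ᵥ f
  set q := Gᵀ *ᵥ w
  have hsupply : ∀ u, w ⬝ᵥ (f + G *ᵥ u) ≤ u ⬝ᵥ (Hᵀ *ᵥ (f + G *ᵥ u)) ↔
      0 ≤ u ⬝ᵥ u + (p - q) ⬝ᵥ u + -(p ⬝ᵥ q) := fun u => by
    rw [dotProduct_add_mulVec_eq hGH, mulVec_add, transpose_mulVec_mulVec_eq_self hGH,
      dotProduct_add, sub_dotProduct, dotProduct_comm u p]
    constructor <;> intro <;> linarith
  rw [forall_congr' hsupply, forall_dotProduct_self_add_dotProduct_add_nonneg_iff]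
  simp only [add_dotProduct, dotProduct_add, sub_dotProduct, dotProduct_sub,
    dotProduct_comm q p]
  constructor <;> intro <;> linarith

theorem forall_l2Gain_ineq_iff (hGH : Gᵀ * H = 1) (f w y : ι → 𝕜)
    (hbalance : f ⬝ᵥ ((H * Hᵀ) *ᵥ f) - 2 * (w ⬝ᵥ f) - 4 * (y ⬝ᵥ y) = 0) :
    (∀ u, w ⬝ᵥ (f + G *ᵥ u) ≤ u ⬝ᵥ u - y ⬝ᵥ y) ↔
      (Hᵀ *ᵥ f + Gᵀ *ᵥ w) ⬝ᵥ (Hᵀ *ᵥ f + Gᵀ *ᵥ w) ≤ 0 := by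
  rw [dotProduct_mul_transpose_mulVec, dotProduct_eq_transpose_mulVec_dotProduct hGH w f]
    at hbalance
  set p := Hᵀ *ᵥ f
  set q := Gᵀ *ᵥ w
  have hsupply : ∀ u, w ⬝ᵥ (f + G *ᵥ u) ≤ u ⬝ᵥ u - y ⬝ᵥ y ↔
      0 ≤ u ⬝ᵥ u + (-q) ⬝ᵥ u + -(p ⬝ᵥ q + y ⬝ᵥ y) := fun u => by
    rw [dotProduct_add_mulVec_eq hGH, neg_dotProduct]
    constructor <;> intro <;> linarith
  rw [forall_congr' hsupply, forall_dotProduct_self_add_dotProduct_add_nonneg_iff]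
  simp only [add_dotProduct, dotProduct_add, neg_dotProduct, dotProduct_neg,
    dotProduct_comm q p]
  constructor <;> intro <;> linarith

end Dissipativity

theorem negativeImaginary_iff_L2gain_general {n : ℕ}
    (f : (Fin n → ℝ) → (Fin n → ℝ))
    (g : (Fin n → ℝ) → Matrix (Fin n) (Fin n) ℝ)
    (h : (Fin n → ℝ) → (Fin n → ℝ))
    (gradV : (Fin n → ℝ) → (Fin n → ℝ))
    (gradh : (Fin n → ℝ) → Matrix (Fin n) (Fin n) ℝ)
    (hgh : ∀ x, (g x)ᵀ * gradh x = 1)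
    (hiden : ∀ x, f x ⬝ᵥ ((gradh x * (gradh x)ᵀ) *ᵥ f x)
        - 2 * (gradV x ⬝ᵥ f x) - 4 * (h x ⬝ᵥ h x) = 0) :
    (∀ x u : Fin n → ℝ,
        gradV x ⬝ᵥ (f x + g x *ᵥ u) ≤ u ⬝ᵥ ((gradh x)ᵀ *ᵥ (f x + g x *ᵥ u)))
    ↔ (∀ x u : Fin n → ℝ,
        gradV x ⬝ᵥ (f x + g x *ᵥ u) ≤ u ⬝ᵥ u - h x ⬝ᵥ h x) :=
  forall_congr' fun x => (forall_negativeImaginary_ineq_iff (hgh x) (f x) (gradV x)).trans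
    (forall_l2Gain_ineq_iff (hgh x) (f x) (gradV x) (h x) (hiden x)).symm

/-- For the input affine system ẋ = f(x) + g(x)u, y = h(x), with a
nonnegative C¹ storage function `V`, `V 0 = 0`, assume `g(x)ᵀ∇h(x) = I` and
`f(x)ᵀ∇h(x)∇h(x)ᵀf(x) − 2∇V(x)ᵀf(x) − 4h(x)ᵀh(x) = 0` for all `x`. Then the
negative imaginary dissipation inequality
`∇V(x)ᵀ(f(x) + g(x)u) ≤ uᵀ∇h(x)ᵀ(f(x) + g(x)u)` holds for all `x`, `u` iff the
L₂-gain ≤ 1 dissipation inequality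
`∇V(x)ᵀ(f(x) + g(x)u) ≤ uᵀu − h(x)ᵀh(x)` holds for all `x`, `u`. -/
theorem negativeImaginary_iff_L2gain {n : ℕ}
    (f : (Fin n → ℝ) → (Fin n → ℝ))
    (g : (Fin n → ℝ) → Matrix (Fin n) (Fin n) ℝ)
    (h : (Fin n → ℝ) → (Fin n → ℝ))
    (hf0 : f 0 = 0) (hh0 : h 0 = 0)
    (V : (Fin n → ℝ) → ℝ)
    (gradV : (Fin n → ℝ) → (Fin n → ℝ))
    (gradh : (Fin n → ℝ) → Matrix (Fin n) (Fin n) ℝ)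
    (hVC1 : ContDiff ℝ 1 V)
    (hVgrad : ∀ x v, fderiv ℝ V x v = gradV x ⬝ᵥ v)
    (hhdiff : Differentiable ℝ h)
    (hhgrad : ∀ x v, fderiv ℝ h x v = (gradh x)ᵀ *ᵥ v)
    (hVnonneg : ∀ x, 0 ≤ V x) (hV0 : V 0 = 0)
    (hgh : ∀ x, (g x)ᵀ * gradh x = 1)
    (hiden : ∀ x, f x ⬝ᵥ ((gradh x * (gradh x)ᵀ) *ᵥ f x)
        - 2 * (gradV x ⬝ᵥ f x) - 4 * (h x ⬝ᵥ h x) = 0) :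
    (∀ x u : Fin n → ℝ,
        gradV x ⬝ᵥ (f x + g x *ᵥ u) ≤ u ⬝ᵥ ((gradh x)ᵀ *ᵥ (f x + g x *ᵥ u)))
    ↔ (∀ x u : Fin n → ℝ,
        gradV x ⬝ᵥ (f x + g x *ᵥ u) ≤ u ⬝ᵥ u - h x ⬝ᵥ h x) :=
  negativeImaginary_iff_L2gain_general f g h gradV gradh hgh hiden
end

section
/- Let A, B ∈ ℝ^{n×n} with B invertible, and let P ∈ ℝ^{n×n} be symmetric positive definite satisfying (1/2)PBBᵀP − 2B⁻ᵀB⁻¹ + (B⁻¹A)ᵀ(B⁻¹A) = 0. Consider the linear system ẋ = Ax + Bu, y = B⁻¹x with storage function V(x) = (1/2)xᵀPx. Then the negative imaginary dissipation inequality xᵀP(Ax + Bu) ≤ uᵀB⁻¹(Ax + Bu) holds for all x, u ∈ ℝⁿ if and only if the L₂-gain ≤ 1 dissipation inequality xᵀP(Ax + Bu) ≤ uᵀu − xᵀB⁻ᵀB⁻¹x holds for all x, u ∈ ℝⁿ. -/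
/-!
For fixed `x`, both dissipation inequalities are concave quadratic inequalities in `u`, so
completing the square in `u` turns them into `q + ‖a - b‖² / 4 ≤ 0` and
`q + γ + ‖a‖² / 4 ≤ 0`, where `a = BᵀPx`, `b = B⁻¹Ax`, `γ = ‖B⁻¹x‖²` and `q = xᵀPAx = a ⬝ b`.
The hypothesis on `P`, read as a quadratic form at `x`, says `‖a‖² / 2 - 2γ + ‖b‖² = 0`,
which makes the first left-hand side exactly half of the second.
-/

open Matrix

variable {ι R : Type*} [Fintype ι]

section CommRing

variable [CommRing R]

theorem dotProduct_transpose_mul_self_mulVec {κ : Type*} [Fintype κ] (M : Matrix κ ι R)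
    (x : ι → R) : x ⬝ᵥ ((Mᵀ * M) *ᵥ x) = (M *ᵥ x) ⬝ᵥ (M *ᵥ x) := by
  rw [← mulVec_mulVec, dotProduct_mulVec, vecMul_transpose]

theorem dotProduct_mulVec_mulVec_of_transpose_eq {P : Matrix ι ι R} (hP : Pᵀ = P)
    (B : Matrix ι ι R) (x v : ι → R) :
    x ⬝ᵥ (P *ᵥ (B *ᵥ v)) = (Bᵀ *ᵥ (P *ᵥ x)) ⬝ᵥ v := by
  rw [dotProduct_mulVec, dotProduct_mulVec, mulVec_transpose, ← mulVec_transpose P, hP]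

theorem dotProduct_inv_mul_mulVec_eq [DecidableEq ι] (A : Matrix ι ι R) {B P : Matrix ι ι R}
    (hB : IsUnit B.det) (hP : Pᵀ = P) (x : ι → R) :
    (Bᵀ *ᵥ (P *ᵥ x)) ⬝ᵥ ((B⁻¹ * A) *ᵥ x) = x ⬝ᵥ (P *ᵥ (A *ᵥ x)) := by
  rw [← dotProduct_mulVec_mulVec_of_transpose_eq hP B, mulVec_mulVec _ B, ← Matrix.mul_assoc,
    mul_nonsing_inv B hB, Matrix.one_mul]

end CommRing

section Field

variable [Field R]

theorem quadForm_eq_zero_of_eq_zero {κ : Type*} [Fintype κ] {P B : Matrix ι ι R}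
    {C D : Matrix κ ι R} (hP : Pᵀ = P)
    (h : (1 / 2 : R) • (P * B * Bᵀ * P) - (2 : R) • (Cᵀ * C) + Dᵀ * D = 0) (x : ι → R) :
    (1 / 2 : R) * ((Bᵀ *ᵥ (P *ᵥ x)) ⬝ᵥ (Bᵀ *ᵥ (P *ᵥ x))) - 2 * (x ⬝ᵥ ((Cᵀ * C) *ᵥ x))
      + (D *ᵥ x) ⬝ᵥ (D *ᵥ x) = 0 := by
  have hx := congrArg (fun M => x ⬝ᵥ (M *ᵥ x)) h
  simp only [add_mulVec, sub_mulVec, smul_mulVec, dotProduct_add, dotProduct_sub,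
    dotProduct_smul, smul_eq_mul, zero_mulVec, dotProduct_zero,
    dotProduct_transpose_mul_self_mulVec D] at hx
  rwa [← mulVec_mulVec, ← mulVec_mulVec, ← mulVec_mulVec,
    dotProduct_mulVec_mulVec_of_transpose_eq hP B] at hx

end Field

section LinearOrderedField

variable [Field R] [LinearOrder R] [IsStrictOrderedRing R]

theorem forall_add_dotProduct_sub_dotProduct_self_nonpos_iff (p : R) (a : ι → R) :
    (∀ u : ι → R, p + a ⬝ᵥ u - u ⬝ᵥ u ≤ 0) ↔ p + a ⬝ᵥ a / 4 ≤ 0 := by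
  have expand (u : ι → R) : (u - (2⁻¹ : R) • a) ⬝ᵥ (u - (2⁻¹ : R) • a)
      = u ⬝ᵥ u - a ⬝ᵥ u + a ⬝ᵥ a / 4 := by
    simp only [sub_dotProduct, dotProduct_sub, smul_dotProduct, dotProduct_smul,
      dotProduct_comm a u, smul_eq_mul]
    ring
  constructor
  · intro h
    have hmax := h ((2⁻¹ : R) • a)
    simp only [dotProduct_smul, smul_dotProduct, smul_eq_mul] at hmax
    linarith
  · intro h u
    have hsq : 0 ≤ (u - (2⁻¹ : R) • a) ⬝ᵥ (u - (2⁻¹ : R) • a) :=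
      Fintype.sum_nonneg fun _ => mul_self_nonneg _
    linarith [expand u]

theorem add_dotProduct_sub_self_div_four_eq_half {a b : ι → R} {q γ : R}
    (hab : a ⬝ᵥ b = q) (hid : (1 / 2 : R) * (a ⬝ᵥ a) - 2 * γ + b ⬝ᵥ b = 0) :
    q + (a - b) ⬝ᵥ (a - b) / 4 = (q + γ + a ⬝ᵥ a / 4) / 2 := by
  rw [sub_dotProduct, dotProduct_sub, dotProduct_sub, dotProduct_comm b a]
  linear_combination (-1 / 2 : R) * hab + (1 / 4 : R) * hid

variable [DecidableEq ι] (A : Matrix ι ι R) {B P : Matrix ι ι R}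

theorem forall_negativeImaginary_ineq_iff_s8 (hB : IsUnit B.det) (hP : Pᵀ = P) (x : ι → R) :
    (∀ u, x ⬝ᵥ (P *ᵥ (A *ᵥ x + B *ᵥ u)) ≤ u ⬝ᵥ (B⁻¹ *ᵥ (A *ᵥ x + B *ᵥ u))) ↔
      x ⬝ᵥ (P *ᵥ (A *ᵥ x)) + (Bᵀ *ᵥ (P *ᵥ x) - (B⁻¹ * A) *ᵥ x) ⬝ᵥ
        (Bᵀ *ᵥ (P *ᵥ x) - (B⁻¹ * A) *ᵥ x) / 4 ≤ 0 := by
  rw [← forall_add_dotProduct_sub_dotProduct_self_nonpos_iff]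
  refine forall_congr' fun u => ?_
  rw [mulVec_add, mulVec_add, dotProduct_add, dotProduct_add,
    dotProduct_mulVec_mulVec_of_transpose_eq hP B x u, mulVec_mulVec u B⁻¹ B,
    nonsing_inv_mul B hB, one_mulVec, mulVec_mulVec x B⁻¹ A, sub_dotProduct,
    dotProduct_comm ((B⁻¹ * A) *ᵥ x) u]
  constructor <;> intro h <;> linarith

theorem forall_L2gain_ineq_iff (hP : Pᵀ = P) (x : ι → R) :
    (∀ u, x ⬝ᵥ (P *ᵥ (A *ᵥ x + B *ᵥ u)) ≤ u ⬝ᵥ u - x ⬝ᵥ ((B⁻¹ᵀ * B⁻¹) *ᵥ x)) ↔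
      x ⬝ᵥ (P *ᵥ (A *ᵥ x)) + x ⬝ᵥ ((B⁻¹ᵀ * B⁻¹) *ᵥ x) +
        (Bᵀ *ᵥ (P *ᵥ x)) ⬝ᵥ (Bᵀ *ᵥ (P *ᵥ x)) / 4 ≤ 0 := by
  rw [← forall_add_dotProduct_sub_dotProduct_self_nonpos_iff]
  refine forall_congr' fun u => ?_
  rw [mulVec_add, dotProduct_add, dotProduct_mulVec_mulVec_of_transpose_eq hP B x u]
  constructor <;> intro h <;> linarith

end LinearOrderedField

/-- For the linear system ẋ = Ax + Bu, y = B⁻¹x with `B`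
invertible and `P` symmetric positive definite satisfying
`(1/2)PBBᵀP − 2B⁻ᵀB⁻¹ + (B⁻¹A)ᵀ(B⁻¹A) = 0`, with storage function
`V(x) = (1/2)xᵀPx`, the negative imaginary dissipation inequality
`xᵀP(Ax + Bu) ≤ uᵀB⁻¹(Ax + Bu)` holds for all `x`, `u` iff the L₂-gain ≤ 1
dissipation inequality `xᵀP(Ax + Bu) ≤ uᵀu − xᵀB⁻ᵀB⁻¹x` holds for all `x`, `u`. -/
theorem linear_negativeImaginary_iff_L2gain {n : ℕ}
    (A B P : Matrix (Fin n) (Fin n) ℝ)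
    (hB : IsUnit B.det)
    (hP : P.PosDef)
    (hiden : (1/2 : ℝ) • (P * B * Bᵀ * P) - (2 : ℝ) • (B⁻¹ᵀ * B⁻¹)
        + (B⁻¹ * A)ᵀ * (B⁻¹ * A) = 0) :
    (∀ x u : Fin n → ℝ,
        x ⬝ᵥ (P *ᵥ (A *ᵥ x + B *ᵥ u)) ≤ u ⬝ᵥ (B⁻¹ *ᵥ (A *ᵥ x + B *ᵥ u)))
    ↔ (∀ x u : Fin n → ℝ,
        x ⬝ᵥ (P *ᵥ (A *ᵥ x + B *ᵥ u)) ≤ u ⬝ᵥ u - x ⬝ᵥ ((B⁻¹ᵀ * B⁻¹) *ᵥ x)) := by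
  have hPt : Pᵀ = P := hP.isHermitian.eq
  refine forall_congr' fun x => ?_
  rw [forall_negativeImaginary_ineq_iff_s8 A hB hPt, forall_L2gain_ineq_iff A hPt,
    add_dotProduct_sub_self_div_four_eq_half (dotProduct_inv_mul_mulVec_eq A hB hPt x)
      (quadForm_eq_zero_of_eq_zero hPt hiden x)]
  constructor <;> intro h <;> linarith
end

section
/- Let A, B ∈ ℝ^{n×n} with B invertible and AB = BA. Then the following are equivalent: (i) there exists a symmetric positive definite matrix P ∈ ℝ^{n×n} such that (A − 2BAB⁻¹)ᵀP + P(A − 2BAB⁻¹) is negative definite; (ii) there exist a symmetric positive definite matrix P ∈ ℝ^{n×n}, a symmetric positive definite matrix T ∈ ℝ^{n×n}, and a scalar β > 0 such that the 2n×2n symmetric block matrix [[AᵀP + PA + T − (4/β)AᵀB⁻ᵀB⁻¹A, PB − (2/β)AᵀB⁻ᵀ], [BᵀP − (2/β)B⁻¹A, −(1/β)I]] is negative semidefinite. -/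
/-! Since `A` and `B` commute, `A - 2BAB⁻¹ = -A`, so (i) says that `AᵀP + PA` is positive
definite. The lower right block `-(1/β)I` of the matrix in (ii) is negative definite, so by
the Schur complement that matrix is negative semidefinite iff `AᵀP + PA - T - β PB(PB)ᵀ` is
positive semidefinite; the cross terms cancel because `B(B⁻¹A) = A`. Given (ii), `AᵀP + PA`
is this matrix plus `T + β PB(PB)ᵀ`, hence positive definite. Given (i), positive
definiteness is an open condition, so `AᵀP + PA - β PB(PB)ᵀ` stays positive definite for
small `β > 0`, and half of it serves as `T`. -/

open Matrix

namespace Matrix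

variable {ι : Type*} [Fintype ι]

open Filter Topology in
theorem PosDef.exists_posDef_sub_smul {S : Matrix ι ι ℝ} (hS : S.PosDef) {N : Matrix ι ι ℝ}
    (hN : N.IsHermitian) : ∃ ε : ℝ, 0 < ε ∧ (S - ε • N).PosDef := by
  set F : ℝ × (ι → ℝ) → ℝ := fun p => p.2 ⬝ᵥ ((S - p.1 • N) *ᵥ p.2)
  have hF : Continuous F := by fun_prop
  have hpos : ∀ᶠ ε in 𝓝 (0 : ℝ), ∀ y ∈ Metric.sphere (0 : ι → ℝ) 1, 0 < F (ε, y) := by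
    refine (isCompact_sphere 0 1).eventually_forall_of_forall_eventually fun y hy => ?_
    refine (hF.tendsto (0, y)).eventually (lt_mem_nhds ?_)
    have hy0 : y ≠ 0 := ne_zero_of_mem_unit_sphere ⟨y, hy⟩
    simpa [F] using hS.dotProduct_mulVec_pos hy0
  obtain ⟨ε, hεS, hε⟩ := ((hpos.filter_mono nhdsWithin_le_nhds).and
    (self_mem_nhdsWithin (s := Set.Ioi (0 : ℝ)))).exists
  refine ⟨ε, hε, .of_dotProduct_mulVec_pos (hS.isHermitian.sub (hN.smul (.all ε)))
    fun x hx => ?_⟩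
  have hx' : ‖x‖ ≠ 0 := norm_ne_zero_iff.mpr hx
  have hy : ‖x‖⁻¹ • x ∈ Metric.sphere (0 : ι → ℝ) 1 := by
    simp [norm_smul, hx']
  have hFy := hεS _ hy
  simp only [F, mulVec_smul, smul_dotProduct, dotProduct_smul, smul_eq_mul] at hFy
  simp only [star_trivial]
  rwa [← mul_assoc, mul_pos_iff_of_pos_left (by positivity)] at hFy

theorem posSemidef_neg_iff_dotProduct_mulVec_nonpos {M : Matrix ι ι ℝ} (hM : M.IsHermitian) :
    (-M).PosSemidef ↔ ∀ z, z ⬝ᵥ (M *ᵥ z) ≤ 0 := by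
  simp only [posSemidef_iff_dotProduct_mulVec, hM.neg, true_and, star_trivial, neg_mulVec,
    dotProduct_neg, neg_nonneg]

theorem posDef_neg_iff_dotProduct_mulVec_neg {M : Matrix ι ι ℝ} (hM : M.IsHermitian) :
    (-M).PosDef ↔ ∀ z ≠ 0, z ⬝ᵥ (M *ᵥ z) < 0 := by
  simp only [posDef_iff_dotProduct_mulVec, hM.neg, true_and, star_trivial, neg_mulVec,
    dotProduct_neg, neg_pos, ne_eq]

theorem isHermitian_transpose_mul_add_mul (K : Matrix ι ι ℝ) {P : Matrix ι ι ℝ}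
    (hP : P.IsHermitian) : (Kᵀ * P + P * K).IsHermitian := by
  rw [IsHermitian, conjTranspose_eq_transpose_of_trivial] at hP ⊢
  simp [transpose_add, transpose_mul, hP, add_comm]

theorem neg_fromBlocks_posSemidef_iff {κ : Type*} [Fintype κ] [DecidableEq κ]
    (X : Matrix ι ι ℝ) (Y : Matrix ι κ ℝ) {c : ℝ} (hc : 0 < c) :
    (-fromBlocks X Y Yᵀ (-(c • 1))).PosSemidef ↔ (-X - c⁻¹ • (Y * Yᵀ)).PosSemidef := by
  have hD : (c • 1 : Matrix κ κ ℝ).PosDef := PosDef.one.smul hc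
  let _ : Invertible (c • 1 : Matrix κ κ ℝ) := invertibleOfLeftInverse _ (c⁻¹ • 1) (by
    rw [smul_mul_smul, mul_one, inv_mul_cancel₀ hc.ne', one_smul])
  have hDinv : (c • 1 : Matrix κ κ ℝ)⁻¹ = c⁻¹ • 1 := inv_eq_left_inv (by
    rw [smul_mul_smul, mul_one, inv_mul_cancel₀ hc.ne', one_smul])
  rw [fromBlocks_neg, neg_neg, show -Yᵀ = (-Y)ᴴ by simp,
    PosDef.fromBlocks₂₂ _ _ hD, hDinv]
  simp [conjTranspose_eq_transpose_of_trivial]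

theorem dissipativity_schurComplement_eq {A B C P T : Matrix ι ι ℝ} {β : ℝ} (hβ : β ≠ 0)
    (hP : Pᵀ = P) (hBC : B * C = A) :
    -(Aᵀ * P + P * A + T - (4 / β) • (Cᵀ * C))
        - β • ((P * B - (2 / β) • Cᵀ) * (P * B - (2 / β) • Cᵀ)ᵀ)
      = Aᵀ * P + P * A - T - β • (P * B * (P * B)ᵀ) := by
  have hPBC : P * B * C = P * A := by rw [Matrix.mul_assoc, hBC]
  have hCBP : Cᵀ * (P * B)ᵀ = Aᵀ * P := by
    rw [← transpose_mul, hPBC, transpose_mul, hP]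
  simp only [transpose_sub, transpose_smul, transpose_transpose, sub_mul, mul_sub,
    smul_mul_assoc, mul_smul_comm, smul_smul, hPBC, hCBP, smul_sub]
  match_scalars <;> field_simp <;> ring

variable [DecidableEq ι]

theorem dissipativity_block_nonpos_iff {A B P T : Matrix ι ι ℝ} {β : ℝ}
    (hB : IsUnit B.det) (hP : P.IsHermitian) (hT : T.IsHermitian) (hβ : 0 < β) :
    (∀ z : ι ⊕ ι → ℝ,
      z ⬝ᵥ (fromBlocks
          (Aᵀ * P + P * A + T - (4 / β) • (Aᵀ * B⁻¹ᵀ * B⁻¹ * A))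
          (P * B - (2 / β) • (Aᵀ * B⁻¹ᵀ))
          (Bᵀ * P - (2 / β) • (B⁻¹ * A))
          (-((1 / β) • (1 : Matrix ι ι ℝ))) *ᵥ z) ≤ 0)
      ↔ (Aᵀ * P + P * A - T - β • (P * B * (P * B)ᵀ)).PosSemidef := by
  have hPt : Pᵀ = P := by rwa [IsHermitian, conjTranspose_eq_transpose_of_trivial] at hP
  set C := B⁻¹ * A
  set X := Aᵀ * P + P * A + T - (4 / β) • (Cᵀ * C)
  set Y := P * B - (2 / β) • Cᵀ
  have hblock : fromBlocks
      (Aᵀ * P + P * A + T - (4 / β) • (Aᵀ * B⁻¹ᵀ * B⁻¹ * A))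
      (P * B - (2 / β) • (Aᵀ * B⁻¹ᵀ)) (Bᵀ * P - (2 / β) • (B⁻¹ * A))
      (-((1 / β) • (1 : Matrix ι ι ℝ))) = fromBlocks X Y Yᵀ (-((1 / β) • 1)) := by
    simp [X, Y, C, transpose_mul, hPt, Matrix.mul_assoc]
  have hX : X.IsHermitian := by
    simp only [IsHermitian, conjTranspose_eq_transpose_of_trivial] at hT ⊢
    simp [X, transpose_add, transpose_mul, hPt, hT, add_comm]
  have hM : (fromBlocks X Y Yᵀ (-((1 / β) • 1))).IsHermitian :=
    hX.fromBlocks (by simp [conjTranspose_eq_transpose_of_trivial])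
      ((isHermitian_one.smul (.all _)).neg)
  rw [hblock, ← posSemidef_neg_iff_dotProduct_mulVec_nonpos hM,
    neg_fromBlocks_posSemidef_iff _ _ (by positivity), one_div, inv_inv]
  rw [show -X - β • (Y * Yᵀ) = _ from
    dissipativity_schurComplement_eq hβ.ne' hPt (mul_nonsing_inv_cancel_left (A := B) A hB)]

theorem sub_two_nsmul_conj_eq_neg {A B : Matrix ι ι ℝ} (hB : IsUnit B.det)
    (hAB : A * B = B * A) : A - 2 • (B * A * B⁻¹) = -A := by
  rw [← hAB, mul_nonsing_inv_cancel_right (A := B) A hB]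
  abel

end Matrix

/-- For `A`, `B` with `B` invertible and `AB = BA`, the following
are equivalent: (i) there is a symmetric positive definite `P` with
`(A − 2BAB⁻¹)ᵀP + P(A − 2BAB⁻¹)` negative definite (asymptotic stability under
the output feedback `u = −2Ay`); (ii) there are symmetric positive definite
`P`, `T` and `β > 0` such that the block matrix
`[[AᵀP + PA + T − (4/β)AᵀB⁻ᵀB⁻¹A, PB − (2/β)AᵀB⁻ᵀ], [BᵀP − (2/β)B⁻¹A, −(1/β)I]]`
is negative semidefinite (strict (Q,S,R)-dissipativity with
`Q = (4/β)I, S = −(2/β)I, R = (1/β)I`). -/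
theorem asympStable_iff_strictlyDissipative {n : ℕ}
    (A B : Matrix (Fin n) (Fin n) ℝ)
    (hB : IsUnit B.det)
    (hAB : A * B = B * A) :
    (∃ P : Matrix (Fin n) (Fin n) ℝ, P.PosDef ∧
      ∀ z : Fin n → ℝ, z ≠ 0 →
        z ⬝ᵥ (((A - 2 • (B * A * B⁻¹))ᵀ * P + P * (A - 2 • (B * A * B⁻¹))) *ᵥ z) < 0)
    ↔ (∃ (P T : Matrix (Fin n) (Fin n) ℝ) (β : ℝ), P.PosDef ∧ T.PosDef ∧ 0 < β ∧
        ∀ z : Fin n ⊕ Fin n → ℝ,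
          z ⬝ᵥ ((Matrix.fromBlocks
              (Aᵀ * P + P * A + T - (4 / β) • (Aᵀ * B⁻¹ᵀ * B⁻¹ * A))
              (P * B - (2 / β) • (Aᵀ * B⁻¹ᵀ))
              (Bᵀ * P - (2 / β) • (B⁻¹ * A))
              (-((1 / β) • (1 : Matrix (Fin n) (Fin n) ℝ)))) *ᵥ z) ≤ 0) := by
  have hLyap (P : Matrix (Fin n) (Fin n) ℝ) :
      (A - 2 • (B * A * B⁻¹))ᵀ * P + P * (A - 2 • (B * A * B⁻¹)) = -(Aᵀ * P + P * A) := by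
    rw [sub_two_nsmul_conj_eq_neg hB hAB, transpose_neg, Matrix.neg_mul, Matrix.mul_neg, neg_add]
  have hStable {P : Matrix (Fin n) (Fin n) ℝ} (hP : P.IsHermitian) :
      (Aᵀ * P + P * A).PosDef ↔
        ∀ z : Fin n → ℝ, z ≠ 0 → z ⬝ᵥ (-(Aᵀ * P + P * A) *ᵥ z) < 0 := by
    rw [← posDef_neg_iff_dotProduct_mulVec_neg (isHermitian_transpose_mul_add_mul A hP).neg,
      neg_neg]
  simp_rw [hLyap]
  constructor
  · rintro ⟨P, hP, hstab⟩
    obtain ⟨β, hβ, hLβ⟩ := ((hStable hP.isHermitian).2 hstab).exists_posDef_sub_smul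
      (isHermitian_mul_conjTranspose_self (P * B))
    rw [conjTranspose_eq_transpose_of_trivial] at hLβ
    have hT := hLβ.smul (one_half_pos (α := ℝ))
    refine ⟨P, _, β, hP, hT, hβ,
      (dissipativity_block_nonpos_iff hB hP.isHermitian hT.isHermitian hβ).2 ?_⟩
    convert hT.posSemidef using 1
    module
  · rintro ⟨P, T, β, hP, hT, hβ, hdiss⟩
    have hSchur :=
      (dissipativity_block_nonpos_iff hB hP.isHermitian hT.isHermitian hβ).1 hdiss
    have hN : (β • (P * B * (P * B)ᵀ)).PosSemidef := by
      simpa [conjTranspose_eq_transpose_of_trivial] using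
        (posSemidef_self_mul_conjTranspose (P * B)).smul hβ.le
    have hL := PosDef.posSemidef_add (hSchur.add hN) hT
    rw [sub_add_cancel, sub_add_cancel] at hL
    exact ⟨P, hP, (hStable hP.isHermitian).1 hL⟩
end

section
/- Let A, B ∈ ℝ^{n×n} with B invertible and AB = BA, let P, T ∈ ℝ^{n×n} be symmetric positive definite, and let β > 0 be a scalar such that the 2n×2n symmetric block matrix [[AᵀP + PA + T − (4/β)AᵀB⁻ᵀB⁻¹A, PB − (2/β)AᵀB⁻ᵀ], [BᵀP − (2/β)B⁻¹A, −(1/β)I]] is negative semidefinite. Then (A − 2BAB⁻¹)ᵀP + P(A − 2BAB⁻¹) ≤ −βPBBᵀP, and in particular (A − 2BAB⁻¹)ᵀP + P(A − 2BAB⁻¹) is negative definite. -/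
open Matrix

/-!
Since `A` commutes with `B`, the closed-loop matrix `A - 2BAB⁻¹` is just `-A`. Testing the
dissipation inequality on `(x, β Mᵀx)`, where `M = PB - (2/β)AᵀB⁻ᵀ` is the off-diagonal block,
yields the Schur complement bound `N + β MMᵀ ≤ 0` for the upper-left block `N`, and expanding
`N + β MMᵀ` gives `T - (AᵀP + PA) + β PBBᵀP`. Hence `AᵀP + PA ≥ T + β PBBᵀP`, which is both
claims because `T > 0` and `PBBᵀP = (BᵀP)ᵀ(BᵀP) ≥ 0`.
-/

variable {𝕜 : Type*} [Field 𝕜] {m n : Type*} [Fintype m] [Fintype n] [DecidableEq n]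

theorem mul_mul_nonsing_inv_of_commute {A B : Matrix n n 𝕜} (hB : IsUnit B.det) (hAB : A * B = B * A) : B * A * B⁻¹ = A := by
  rw [← hAB, mul_nonsing_inv_cancel_right B A hB]

theorem dotProduct_mulVec_add_smul_mul_transpose_nonpos [LinearOrder 𝕜] [IsStrictOrderedRing 𝕜]
    {N : Matrix m m 𝕜} {M : Matrix m n 𝕜} {β : 𝕜} (hβ : β ≠ 0)
    (h : ∀ z : m ⊕ n → 𝕜, z ⬝ᵥ (fromBlocks N M Mᵀ (-((1 / β) • 1)) *ᵥ z) ≤ 0) (x : m → 𝕜) :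
    x ⬝ᵥ ((N + β • (M * Mᵀ)) *ᵥ x) ≤ 0 := by
  have hx := h (Sum.elim x (β • (Mᵀ *ᵥ x)))
  rw [fromBlocks_mulVec, sumElim_dotProduct_sumElim] at hx
  simp only [Sum.elim_comp_inl, Sum.elim_comp_inr, mulVec_smul, dotProduct_add, dotProduct_smul,
    smul_dotProduct, neg_mulVec, one_mulVec, dotProduct_neg, smul_mulVec, smul_eq_mul] at hx
  have hMMt : x ⬝ᵥ (M *ᵥ (Mᵀ *ᵥ x)) = (Mᵀ *ᵥ x) ⬝ᵥ (Mᵀ *ᵥ x) := by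
    rw [dotProduct_mulVec, ← mulVec_transpose]
  rw [add_mulVec, dotProduct_add, smul_mulVec, dotProduct_smul, smul_eq_mul, ← mulVec_mulVec,
    hMMt]
  rw [hMMt, mul_neg, ← mul_assoc, mul_one_div_cancel hβ, one_mul] at hx
  linarith

theorem dissipation_schur_complement_eq {A B P T : Matrix n n 𝕜} {β : 𝕜} (hB : IsUnit B.det) (hP : Pᵀ = P) (hβ : β ≠ 0) :
    Aᵀ * P + P * A + T - (4 / β) • (Aᵀ * B⁻¹ᵀ * B⁻¹ * A)
        + β • ((P * B - (2 / β) • (Aᵀ * B⁻¹ᵀ)) * (P * B - (2 / β) • (Aᵀ * B⁻¹ᵀ))ᵀ)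
      = T - (Aᵀ * P + P * A) + β • (P * B * Bᵀ * P) := by
  have hBB : B⁻¹ᵀ * (Bᵀ * P) = P := by
    rw [← Matrix.mul_assoc, ← transpose_mul, mul_nonsing_inv B hB, transpose_one, Matrix.one_mul]
  simp only [transpose_sub, transpose_smul, transpose_mul, transpose_transpose, hP, Matrix.sub_mul,
    Matrix.mul_sub, smul_sub, Matrix.smul_mul, Matrix.mul_smul, smul_smul, Matrix.mul_assoc,
    mul_nonsing_inv_cancel_left B A hB, hBB]
  match_scalars <;> field_simp <;> ring

/-- For `A`, `B` with `B` invertible and `AB = BA`, if `P`, `T`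
are symmetric positive definite and `β > 0` are such that the block matrix
`[[AᵀP + PA + T − (4/β)AᵀB⁻ᵀB⁻¹A, PB − (2/β)AᵀB⁻ᵀ], [BᵀP − (2/β)B⁻¹A, −(1/β)I]]`
is negative semidefinite (strict (Q,S,R)-dissipativity), then
`(A − 2BAB⁻¹)ᵀP + P(A − 2BAB⁻¹) ≤ −βPBBᵀP` (i.e. the difference
`−βPBBᵀP − ((A − 2BAB⁻¹)ᵀP + P(A − 2BAB⁻¹))` is positive semidefinite), and in
particular `(A − 2BAB⁻¹)ᵀP + P(A − 2BAB⁻¹)` is negative definite. -/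
theorem asympStable_of_strictlyDissipative {n : ℕ}
    (A B P T : Matrix (Fin n) (Fin n) ℝ)
    (hB : IsUnit B.det)
    (hAB : A * B = B * A)
    (hP : P.PosDef) (hT : T.PosDef)
    (β : ℝ) (hβ : 0 < β)
    (hdissip : ∀ z : Fin n ⊕ Fin n → ℝ,
      z ⬝ᵥ ((Matrix.fromBlocks
          (Aᵀ * P + P * A + T - (4 / β) • (Aᵀ * B⁻¹ᵀ * B⁻¹ * A))
          (P * B - (2 / β) • (Aᵀ * B⁻¹ᵀ))
          (Bᵀ * P - (2 / β) • (B⁻¹ * A))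
          (-((1 / β) • (1 : Matrix (Fin n) (Fin n) ℝ)))) *ᵥ z) ≤ 0) :
    (∀ z : Fin n → ℝ,
      0 ≤ z ⬝ᵥ ((-(β • (P * B * Bᵀ * P))
        - ((A - 2 • (B * A * B⁻¹))ᵀ * P + P * (A - 2 • (B * A * B⁻¹)))) *ᵥ z))
    ∧ (∀ z : Fin n → ℝ, z ≠ 0 →
      z ⬝ᵥ (((A - 2 • (B * A * B⁻¹))ᵀ * P + P * (A - 2 • (B * A * B⁻¹))) *ᵥ z) < 0) := by
  have hPt : Pᵀ = P := hP.isHermitian.eq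
  have hMt : (P * B - (2 / β) • (Aᵀ * B⁻¹ᵀ))ᵀ = Bᵀ * P - (2 / β) • (B⁻¹ * A) := by
    simp only [transpose_sub, transpose_smul, transpose_mul, transpose_transpose, hPt]
  rw [← hMt] at hdissip
  have hSchur := dotProduct_mulVec_add_smul_mul_transpose_nonpos hβ.ne' hdissip
  simp only [dissipation_schur_complement_eq hB hPt hβ.ne'] at hSchur
  have hTnonneg (z : Fin n → ℝ) : 0 ≤ z ⬝ᵥ (T *ᵥ z) := by
    simpa using hT.posSemidef.dotProduct_mulVec_nonneg z
  have hTpos {z : Fin n → ℝ} (hz : z ≠ 0) : 0 < z ⬝ᵥ (T *ᵥ z) := by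
    simpa using hT.dotProduct_mulVec_pos hz
  have hPBBP : (P * B * Bᵀ * P).PosSemidef := by
    simpa [hPt, Matrix.mul_assoc] using posSemidef_conjTranspose_mul_self (Bᵀ * P)
  have hPBBPnonneg (z : Fin n → ℝ) : 0 ≤ β * (z ⬝ᵥ ((P * B * Bᵀ * P) *ᵥ z)) :=
    mul_nonneg hβ.le (by simpa using hPBBP.dotProduct_mulVec_nonneg z)
  have hclosed : A - 2 • (B * A * B⁻¹) = -A := by
    rw [mul_mul_nonsing_inv_of_commute hB hAB, two_smul]
    abel
  rw [hclosed]
  simp only [transpose_neg, neg_mul, mul_neg, sub_mulVec, add_mulVec, neg_mulVec, smul_mulVec,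
    dotProduct_sub, dotProduct_add, dotProduct_neg, dotProduct_smul, smul_eq_mul] at hSchur ⊢
  exact ⟨fun z => by linarith [hSchur z, hTnonneg z],
    fun z hz => by linarith [hSchur z, hTpos hz, hPBBPnonneg z]⟩
end
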